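/- There exist a constant K₂ ∈ (0,1) and a positive constant C_{K₂,λ} such that for all x,y ∈ ℝ₊ with y < K₂·x, one has R_{Δ_λ}(x,y) ≤ −C_{K₂,λ} / x^{2λ+1}. -/

import Mathlib

open MeasureTheory Real Set Filter

/-!
For `0 ≤ y ≤ x/2` the numerator `x - y cos θ` is at least `x/2` and the denominator
`x² + y² - 2xy cos θ ≤ (x + y)²` is at most `4x²`, so the integrand of the kernel dominates
`x/2 · (4x²)^(-λ-1) · sin^(2λ-1) θ`. Since `2λ - 1 > -1`, `sin^(2λ-1)` is integrable on
`[0, π]` with positive integral, and `x · (x²)^(-λ-1) = x^(-2λ-1)` gives the bound with `K₂ = 1/2`.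
-/

/-- The Riesz kernel `R_{Δ_λ}(x,y)`. -/
noncomputable def rieszKernel (lam x y : ℝ) : ℝ :=
  -(2 * lam / π) * ∫ θ in (0:ℝ)..π,
    ((x - y * Real.cos θ) * Real.sin θ ^ (2*lam - 1)) /
      ((x^2 + y^2 - 2*x*y*Real.cos θ) ^ (lam + 1))

/- On `[0, π/2]` Jordan's inequality `2θ/π ≤ sin θ` dominates `sin θ ^ p` (for `p < 0`) by an
integrable power of `θ`. -/
lemma intervalIntegrable_sin_rpow_zero_pi_div_two {p : ℝ} (hp : -1 < p) :
    IntervalIntegrable (fun θ => sin θ ^ p) volume 0 (π / 2) := by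
  rcases le_or_gt 0 p with hp0 | hp0
  · exact (continuous_sin.rpow_const fun _ => Or.inr hp0).intervalIntegrable _ _
  have hdom : IntervalIntegrable (fun θ : ℝ => (2 / π * θ) ^ p) volume 0 (π / 2) := by
    simpa [one_div_div] using
      (intervalIntegral.intervalIntegrable_rpow' hp (a := 0) (b := 1)).comp_mul_left (c := 2 / π)
  refine hdom.mono_fun (continuous_sin.measurable.pow_const p).aestronglyMeasurable ?_
  filter_upwards [ae_restrict_mem measurableSet_uIoc] with θ hθ
  rw [uIoc_of_le (by positivity : (0:ℝ) ≤ π / 2)] at hθ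
  have hsin : 0 ≤ sin θ := sin_nonneg_of_nonneg_of_le_pi hθ.1.le (by linarith [pi_pos, hθ.2])
  rw [norm_of_nonneg (rpow_nonneg hsin p),
    norm_of_nonneg (rpow_nonneg (mul_nonneg (by positivity) hθ.1.le) p)]
  exact rpow_le_rpow_of_nonpos (mul_pos (by positivity) hθ.1) (mul_le_sin hθ.1.le hθ.2) hp0.le

lemma intervalIntegrable_sin_rpow {p : ℝ} (hp : -1 < p) :
    IntervalIntegrable (fun θ => sin θ ^ p) volume 0 π := by
  have h := intervalIntegrable_sin_rpow_zero_pi_div_two hp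
  refine h.trans ?_
  simpa [sin_pi_sub, sub_half] using (h.comp_sub_left π).symm

lemma integral_sin_rpow_pos {p : ℝ} (hp : -1 < p) : 0 < ∫ θ in (0:ℝ)..π, sin θ ^ p :=
  intervalIntegral.intervalIntegral_pos_of_pos_on (intervalIntegrable_sin_rpow hp)
    (fun _ hθ => rpow_pos_of_pos (sin_pos_of_pos_of_lt_pi hθ.1 hθ.2) _) pi_pos

lemma sq_add_sq_sub_two_mul_mul_cos_pos {x y : ℝ} (hy : 0 ≤ y) (hyx : y < x) (θ : ℝ) :
    0 < x ^ 2 + y ^ 2 - 2 * x * y * cos θ := by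
  nlinarith [mul_nonneg (mul_nonneg hy (hy.trans hyx.le)) (sub_nonneg.2 (cos_le_one θ)),
    pow_pos (sub_pos.2 hyx) 2]

lemma div_sq_rpow_add_one {x : ℝ} (hx : 0 < x) (a : ℝ) :
    x / (x ^ 2) ^ (a + 1) = 1 / x ^ (2 * a + 1) := by
  rw [← rpow_natCast x 2, ← rpow_mul hx.le,
    show ((2 : ℕ) : ℝ) * (a + 1) = (2 * a + 1) + 1 by push_cast; ring, rpow_add_one hx.ne']
  field_simp

lemma div_four_mul_sq_rpow_le {a x y : ℝ} (ha : 0 ≤ a + 1) (hx : 0 < x) (hy : 0 ≤ y)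
    (hyx : y ≤ x / 2) (θ : ℝ) :
    x / 2 / (4 * x ^ 2) ^ (a + 1) ≤
      (x - y * cos θ) / (x ^ 2 + y ^ 2 - 2 * x * y * cos θ) ^ (a + 1) := by
  have hD := sq_add_sq_sub_two_mul_mul_cos_pos hy (by linarith : y < x) θ
  have hnum : x / 2 ≤ x - y * cos θ := by
    nlinarith [mul_le_of_le_one_right hy (cos_le_one θ)]
  have hden : x ^ 2 + y ^ 2 - 2 * x * y * cos θ ≤ 4 * x ^ 2 := by
    nlinarith [neg_one_le_cos θ, mul_nonneg hx.le hy]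
  exact div_le_div₀ (by linarith) hnum (rpow_pos_of_pos hD _) (rpow_le_rpow hD.le hden ha)

lemma integral_rieszIntegrand_ge {lam x y : ℝ} (hlam : 0 < lam) (hx : 0 < x) (hy : 0 ≤ y)
    (hyx : y ≤ x / 2) :
    x / 2 / (4 * x ^ 2) ^ (lam + 1) * ∫ θ in (0:ℝ)..π, sin θ ^ (2 * lam - 1) ≤
      ∫ θ in (0:ℝ)..π, (x - y * cos θ) * sin θ ^ (2 * lam - 1) /
        (x ^ 2 + y ^ 2 - 2 * x * y * cos θ) ^ (lam + 1) := by
  have hsin := intervalIntegrable_sin_rpow (p := 2 * lam - 1) (by linarith)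
  have hcont : Continuous fun θ =>
      (x - y * cos θ) / (x ^ 2 + y ^ 2 - 2 * x * y * cos θ) ^ (lam + 1) :=
    (by fun_prop : Continuous fun θ => x - y * cos θ).div
      ((by fun_prop : Continuous fun θ => x ^ 2 + y ^ 2 - 2 * x * y * cos θ).rpow_const
        fun _ => Or.inr (by linarith))
      fun θ => (rpow_pos_of_pos
        (sq_add_sq_sub_two_mul_mul_cos_pos hy (by linarith : y < x) θ) _).ne'
  rw [← intervalIntegral.integral_const_mul]
  simp only [mul_div_right_comm]
  refine intervalIntegral.integral_mono_on pi_pos.le (hsin.const_mul _)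
    (hsin.continuousOn_mul hcont.continuousOn) fun θ hθ => ?_
  exact mul_le_mul_of_nonneg_right (div_four_mul_sq_rpow_le (by linarith) hx hy hyx θ)
    (rpow_nonneg (sin_nonneg_of_nonneg_of_le_pi hθ.1 hθ.2) _)

lemma rieszKernel_le_of_le_half {lam x y : ℝ} (hlam : 0 < lam) (hx : 0 < x) (hy : 0 ≤ y)
    (hyx : y ≤ x / 2) :
    rieszKernel lam x y ≤
      -(lam * (∫ θ in (0:ℝ)..π, sin θ ^ (2 * lam - 1)) / (π * 4 ^ (lam + 1))) /
        x ^ (2 * lam + 1) := by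
  have hconst : x / 2 / (4 * x ^ 2) ^ (lam + 1) = 1 / (2 * 4 ^ (lam + 1)) / x ^ (2 * lam + 1) := by
    rw [mul_rpow (by norm_num) (sq_nonneg x), div_right_comm, div_mul_eq_div_div_swap,
      div_sq_rpow_add_one hx]
    field_simp
  have hlower := integral_rieszIntegrand_ge hlam hx hy hyx
  rw [hconst] at hlower
  calc rieszKernel lam x y
      ≤ -(2 * lam / π) * (1 / (2 * 4 ^ (lam + 1)) / x ^ (2 * lam + 1) *
          ∫ θ in (0:ℝ)..π, sin θ ^ (2 * lam - 1)) := by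
        rw [rieszKernel, neg_mul, neg_mul, neg_le_neg_iff]
        exact mul_le_mul_of_nonneg_left hlower (by positivity)
    _ = _ := by field_simp

/-- Upper bound: there exist `K₂ ∈ (0,1)` and `C > 0` such that for `y < K₂ x`,
`R_{Δ_λ}(x,y) ≤ -C / x^{2λ+1}`. -/
theorem riesz_kernel_upper_bound_near_zero (lam : ℝ) (hlam : 0 < lam) :
    ∃ K₂ C : ℝ, 0 < K₂ ∧ K₂ < 1 ∧ 0 < C ∧ ∀ x y : ℝ, 0 < x → 0 < y → y < K₂ * x →
      rieszKernel lam x y ≤ -C / x ^ (2*lam + 1) := by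
  have hI := integral_sin_rpow_pos (p := 2 * lam - 1) (by linarith)
  refine ⟨1 / 2, lam * (∫ θ in (0:ℝ)..π, sin θ ^ (2 * lam - 1)) / (π * 4 ^ (lam + 1)),
    by norm_num, by norm_num, by positivity, fun x y hx hy hyx => ?_⟩
  exact rieszKernel_le_of_le_half hlam hx hy.le (by linarith)
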